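/- Let X be a directed space. If the convergence class S*_X is topological, then X is a quasicontinuous space: for every x ∈ X there is a directed family F of finite sets with x ∈ int(↑F) for all F ∈ F and F → x. -/
import Mathlib


namespace Conv

variable {X : Type}

/-- A directed preorder (index of a net), given as an explicit relation. -/
def DirIdx {I : Type} (r : I → I → Prop) : Prop :=
  Nonempty I ∧ (∀ i, r i i) ∧ (∀ a b c : I, r a b → r b c → r a c) ∧
    ∀ a b : I, ∃ c, r a c ∧ r b c

/-- Specialization order relative to a family `T` of "open" sets. -/
def sle (T : Set (Set X)) (x y : X) : Prop := ∀ U ∈ T, x ∈ U → y ∈ U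

/-- Upper closure of a set w.r.t. the specialization order of `T`. -/
def upset (T : Set (Set X)) (A : Set X) : Set X := {z | ∃ a ∈ A, sle T a z}

/-- `D` is a (nonempty) directed subset w.r.t. the specialization order of `T`. -/
def IsDirSet (T : Set (Set X)) (D : Set X) : Prop := D.Nonempty ∧ DirectedOn (sle T) D

/-- A subset `D` (viewed as a monotone net) converges to `x` w.r.t. `T`. -/
def DConv (T : Set (Set X)) (D : Set X) (x : X) : Prop :=
  ∀ U ∈ T, x ∈ U → (D ∩ U).Nonempty

/-- `U` is directed-open w.r.t. `T`. -/
def DirOpen (T : Set (Set X)) (U : Set X) : Prop :=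
  ∀ D x, IsDirSet T D → DConv T D x → x ∈ U → (D ∩ U).Nonempty

/-- The family of directed-open sets. -/
def DTop (T : Set (Set X)) : Set (Set X) := {U | DirOpen T U}

/-- The family of open sets of a topological space. -/
def opens (X : Type) [TopologicalSpace X] : Set (Set X) := {U | IsOpen U}

/-- Every directed-open set belongs to `T`. -/
def DirT (T : Set (Set X)) : Prop := ∀ U, DirOpen T U → U ∈ T

/-- A directed space: every directed-open set is open. -/
def IsDirectedSpace (X : Type) [TopologicalSpace X] : Prop := DirT (opens X)

/-- A net is eventually in `U`. -/
def EvIn {I : Type} (r : I → I → Prop) (xi : I → X) (U : Set X) : Prop :=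
  ∃ k, ∀ i, r k i → xi i ∈ U

/-- `y` is an eventual lower bound of the net `xi`. -/
def EvLB (T : Set (Set X)) {I : Type} (r : I → I → Prop) (xi : I → X) (y : X) : Prop :=
  ∃ k, ∀ i, r k i → sle T y (xi i)

/-- Topological convergence of a net w.r.t. the family `T` of open sets. -/
def NConv (T : Set (Set X)) {I : Type} (r : I → I → Prop) (xi : I → X) (x : X) : Prop :=
  ∀ U ∈ T, x ∈ U → EvIn r xi U

/-- `((x_i), x) ∈ S_X`: some directed set of eventual lower bounds converges to `x`. -/
def SConv (T : Set (Set X)) {I : Type} (r : I → I → Prop) (xi : I → X) (x : X) : Prop :=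
  ∃ D : Set X, IsDirSet T D ∧ (∀ d ∈ D, EvLB T r xi d) ∧ DConv T D x

/-- `U` is open in the topology determined by `S_X`. -/
def SOpen (T : Set (Set X)) (U : Set X) : Prop :=
  ∀ (I : Type) (r : I → I → Prop), DirIdx r → ∀ (xi : I → X) (x : X),
    SConv T r xi x → x ∈ U → EvIn r xi U

/-- `y ≪_d x`. -/
def WayBelow (T : Set (Set X)) (y x : X) : Prop :=
  ∀ D : Set X, IsDirSet T D → DConv T D x → ∃ d ∈ D, sle T y d

/-- A continuous space (relative to the family `T`). -/
def IsContinuousT (T : Set (Set X)) : Prop :=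
  DirT T ∧ ∀ x : X, IsDirSet T {y | WayBelow T y x} ∧ DConv T {y | WayBelow T y x} x

def IsContinuousSpace (X : Type) [TopologicalSpace X] : Prop := IsContinuousT (opens X)

/-- `G ≪_d H` for subsets. -/
def SWayBelow (T : Set (Set X)) (G H : Set X) : Prop :=
  ∀ (D : Set X) (x : X), IsDirSet T D → DConv T D x → x ∈ H → (D ∩ upset T G).Nonempty

/-- A directed family of finite sets (ordered by reverse inclusion of upper closures). -/
def IsDirFam (T : Set (Set X)) (F : Set (Set X)) : Prop :=
  F.Nonempty ∧ (∀ A ∈ F, A.Finite) ∧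
    ∀ A ∈ F, ∀ B ∈ F, ∃ C ∈ F, upset T C ⊆ upset T A ∧ upset T C ⊆ upset T B

/-- Convergence of a family of finite sets to `x`. -/
def FamConv (T : Set (Set X)) (F : Set (Set X)) (x : X) : Prop :=
  ∀ U ∈ T, x ∈ U → ∃ A ∈ F, upset T A ⊆ U

/-- `fin_d(x)`. -/
def finD (T : Set (Set X)) (x : X) : Set (Set X) := {A | A.Finite ∧ SWayBelow T A {x}}

def IsQuasicontinuousT (T : Set (Set X)) : Prop :=
  DirT T ∧ ∀ x : X, IsDirFam T (finD T x) ∧ FamConv T (finD T x) x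

def IsQuasicontinuousSpace (X : Type) [TopologicalSpace X] : Prop :=
  IsQuasicontinuousT (opens X)

/-- `A` is a quasi eventual lower bound of the net `xi`. -/
def QEvLB (T : Set (Set X)) {I : Type} (r : I → I → Prop) (xi : I → X) (A : Set X) : Prop :=
  A.Finite ∧ ∃ k, ∀ i, r k i → xi i ∈ upset T A

/-- `((x_i), x) ∈ S*_X`. -/
def QSConv (T : Set (Set X)) {I : Type} (r : I → I → Prop) (xi : I → X) (x : X) : Prop :=
  ∃ F : Set (Set X), IsDirFam T F ∧ (∀ A ∈ F, QEvLB T r xi A) ∧ FamConv T F x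

/-- `U` is open in the topology determined by `S*_X`. -/
def QSOpen (T : Set (Set X)) (U : Set X) : Prop :=
  ∀ (I : Type) (r : I → I → Prop), DirIdx r → ∀ (xi : I → X) (x : X),
    QSConv T r xi x → x ∈ U → EvIn r xi U

/-- `x ≡ liminf x_i`. -/
def IsLiminf (T : Set (Set X)) {I : Type} (r : I → I → Prop) (xi : I → X) (x : X) : Prop :=
  (∀ y, EvLB T r xi y → sle T y x) ∧
  (∀ z, (∀ y, EvLB T r xi y → sle T y z) → sle T x z) ∧
  SConv T r xi x

/-- `f : (J,s) → (I,r)` is a subnet map: monotone and cofinal, with directed domain. -/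
def Subnet {I J : Type} (r : I → I → Prop) (s : J → J → Prop) (f : J → I) : Prop :=
  DirIdx s ∧ (∀ a b, s a b → r (f a) (f b)) ∧ ∀ i, ∃ j, r i (f j)

/-- `z` is a cofinal lower bound of the net `xi`. -/
def CofLB (T : Set (Set X)) {I : Type} (r : I → I → Prop) (xi : I → X) (z : X) : Prop :=
  ∀ i, ∃ j, r i j ∧ sle T z (xi j)

/-- `((x_i), x) ∈ L_X`: every subnet has liminf `x`. -/
def LConv (T : Set (Set X)) {I : Type} (r : I → I → Prop) (xi : I → X) (x : X) : Prop :=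
  ∀ (J : Type) (s : J → J → Prop) (f : J → I), Subnet r s f →
    IsLiminf T s (fun j => xi (f j)) x

/-- `U` is open in the liminf topology `L(X)`. -/
def LOpen (T : Set (Set X)) (U : Set X) : Prop :=
  ∀ (I : Type) (r : I → I → Prop), DirIdx r → ∀ (xi : I → X) (x : X),
    LConv T r xi x → x ∈ U → EvIn r xi U

/-- `x ≡_q liminf x_i`. -/
def QLiminf (T : Set (Set X)) {I : Type} (r : I → I → Prop) (xi : I → X) (x : X) : Prop :=
  QSConv T r xi x ∧ ∀ y, EvLB T r xi y → sle T y x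

/-- `((x_i), x) ∈ L*_X`: every subnet quasi-liminf converges to `x`. -/
def QLConv (T : Set (Set X)) {I : Type} (r : I → I → Prop) (xi : I → X) (x : X) : Prop :=
  ∀ (J : Type) (s : J → J → Prop) (f : J → I), Subnet r s f →
    QLiminf T s (fun j => xi (f j)) x

/-- `U` is open in the quasi-liminf topology `L*(X)`. -/
def QLOpen (T : Set (Set X)) (U : Set X) : Prop :=
  ∀ (I : Type) (r : I → I → Prop), DirIdx r → ∀ (xi : I → X) (x : X),
    QLConv T r xi x → x ∈ U → EvIn r xi U

/-- The Lawson topology: generated by the opens of `X` and complements of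
principal upper sets. -/
def lawson (X : Type) [TopologicalSpace X] : Set (Set X) :=
  {U | (TopologicalSpace.generateFrom
      (opens X ∪ {V | ∃ y : X, V = {z : X | sle (opens X) y z}ᶜ})).IsOpen U}

lemma sle_refl' (T : Set (Set X)) (a : X) : sle T a a := fun _ _ h => h

lemma sle_trans' {T : Set (Set X)} {a b c : X} (h1 : sle T a b) (h2 : sle T b c) :
    sle T a c := fun U hU ha => h2 U hU (h1 U hU ha)

lemma qsopen_isOpen [TopologicalSpace X] (hd : IsDirectedSpace X)
    {V : Set X} (hV : QSOpen (opens X) V) : IsOpen V := by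
  apply hd
  intro D x hD hconv hxV
  obtain ⟨⟨d0, hd0⟩, hdir⟩ := hD
  have hqs : QSConv (opens X) (fun a b : {d // d ∈ D} => sle (opens X) a.1 b.1)
      (fun i => i.1) x := by
    refine ⟨(fun d => ({d} : Set X)) '' D, ⟨⟨{d0}, ⟨d0, hd0, rfl⟩⟩, ?_, ?_⟩, ?_, ?_⟩
    · rintro A ⟨d, -, rfl⟩; exact Set.finite_singleton d
    · rintro A ⟨a, ha, rfl⟩ B ⟨b, hb, rfl⟩
      obtain ⟨c, hc, h1, h2⟩ := hdir a ha b hb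
      refine ⟨{c}, ⟨c, hc, rfl⟩, ?_, ?_⟩
      · rintro z ⟨w, hw, hwz⟩
        rcases hw with rfl
        exact ⟨a, rfl, sle_trans' h1 hwz⟩
      · rintro z ⟨w, hw, hwz⟩
        rcases hw with rfl
        exact ⟨b, rfl, sle_trans' h2 hwz⟩
    · rintro A ⟨d, hdD, rfl⟩
      exact ⟨Set.finite_singleton d, ⟨⟨d, hdD⟩, fun i hi => ⟨d, rfl, hi⟩⟩⟩
    · intro U hU hxU
      obtain ⟨d, hdD, hdU⟩ := hconv U hU hxU
      refine ⟨{d}, ⟨d, hdD, rfl⟩, ?_⟩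
      rintro z ⟨w, hw, hwz⟩
      rcases hw with rfl
      exact hwz U hU hdU
  have hidx : DirIdx (fun a b : {d // d ∈ D} => sle (opens X) a.1 b.1) := by
    refine ⟨⟨⟨d0, hd0⟩⟩, fun i => sle_refl' _ _, fun a b c h1 h2 => sle_trans' h1 h2, ?_⟩
    intro a b
    obtain ⟨c, hc, h1, h2⟩ := hdir a.1 a.2 b.1 b.2
    exact ⟨⟨c, hc⟩, h1, h2⟩
  obtain ⟨k, hk⟩ := hV _ _ hidx _ x hqs hxV
  exact ⟨k.1, k.2, hk k (sle_refl' _ _)⟩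

theorem stmt14 (X : Type) [TopologicalSpace X] [T0Space X]
    (hd : IsDirectedSpace X)
    (ht : ∀ (I : Type) (r : I → I → Prop), DirIdx r → ∀ (xi : I → X) (x : X),
      QSConv (opens X) r xi x ↔ NConv {U | QSOpen (opens X) U} r xi x) :
    ∀ x : X, ∃ F : Set (Set X), IsDirFam (opens X) F ∧
      (∀ A ∈ F, x ∈ interior (upset (opens X) A)) ∧ FamConv (opens X) F x := by
  intro x
  -- canonical neighborhood net
  let I : Type := {p : Set X × X // IsOpen p.1 ∧ x ∈ p.1 ∧ p.2 ∈ p.1}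
  let r : I → I → Prop := fun a b => b.1.1 ⊆ a.1.1
  let xi : I → X := fun p => p.1.2
  have hidx : DirIdx r := by
    refine ⟨⟨⟨(Set.univ, x), isOpen_univ, trivial, trivial⟩⟩, fun i => subset_rfl,
      fun a b c h1 h2 => h2.trans h1, ?_⟩
    intro a b
    refine ⟨⟨(a.1.1 ∩ b.1.1, x), a.2.1.inter b.2.1, ⟨a.2.2.1, b.2.2.1⟩,
      ⟨a.2.2.1, b.2.2.1⟩⟩, Set.inter_subset_left, Set.inter_subset_right⟩
  have hn : NConv {U | QSOpen (opens X) U} r xi x := by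
    intro V hV hxV
    have hVo : IsOpen V := qsopen_isOpen hd hV
    refine ⟨⟨(V, x), hVo, hxV, hxV⟩, ?_⟩
    intro i hi
    exact hi i.2.2.2
  obtain ⟨F, hF, hQ, hconv⟩ := (ht I r hidx xi x).mpr hn
  refine ⟨F, hF, ?_, hconv⟩
  intro A hA
  obtain ⟨hfin, k, hk⟩ := hQ A hA
  have hsub : k.1.1 ⊆ upset (opens X) A := by
    intro a ha
    exact hk ⟨(k.1.1, a), k.2.1, k.2.2.1, ha⟩ subset_rfl
  exact interior_maximal hsub k.2.1 k.2.2.1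

end Conv
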